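/- arXiv:2212.14259 — 3 statements merged into one kernel-verified Lean document; each statement's English description precedes it below -/
import Mathlib

section
/- Let 𝒳 ⊂ L⁰_c and 𝒴 ⊂ ca_c be linear subspaces such that ⟨𝒳,𝒴⟩ is a dual pair under the bilinear pairing (X,μ) ↦ ∫ X dμ (every X ∈ 𝒳 is integrable with respect to every μ ∈ 𝒴, and the pairing separates points of 𝒳 and of 𝒴), and suppose μ ∈ 𝒴 implies |μ| ∈ 𝒴. If 𝒞 ⊂ 𝒳 is non-empty, convex, and σ(𝒳,𝒴)-closed, then there exists a set 𝒬 ⊂ 𝔓_c(Ω) ∩ 𝒴 of probability measures such that 𝒞 = (⋂_{Q∈𝒬} j_Q⁻¹(j_Q(𝒞))) ∩ 𝒳. -/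
/-!
Suppose `f ∈ 𝒳` lies in every `j_Q⁻¹(j_Q 𝒞)` but not in `𝒞`. Since `σ(𝒳,𝒴)` is the initial
topology of the maps `X ↦ ∫ X dμ`, finitely many `μ₁, …, μₙ ∈ 𝒴` already separate `f` from the
closure of the (convex) image of `𝒞` in `ℝⁿ`, and Hahn–Banach in `ℝⁿ` yields `c` and `u` with
`∑ cᵢ ∫ g dμᵢ < u < ∑ cᵢ ∫ f dμᵢ` for all `g ∈ 𝒞`. Normalising `∑ |cᵢ| |μᵢ|` (which lies in `𝒴`
because `𝒴` is closed under `|·|`) gives some `Q ∈ 𝔓_c(Ω) ∩ 𝒴`, so `f = g` `Q`-a.s. for some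
`g ∈ 𝒞`; then `f = g` `|μᵢ|`-a.s. whenever `cᵢ ≠ 0`, so the two sums coincide, a contradiction.
-/

open MeasureTheory Filter Set
open scoped ENNReal

namespace Robust

variable {Ω : Type*} [MeasurableSpace Ω]

/-- `Q` vanishes on every `𝔓`-polar set, i.e. `Q ≪ 𝔓`. -/
def AC (𝔓 : Set (Measure Ω)) (Q : Measure Ω) : Prop :=
  ∀ N : Set Ω, MeasurableSet N → (∀ P ∈ 𝔓, P N = 0) → Q N = 0

/-- `𝔓_c(Ω)`: probability measures vanishing on all `𝔓`-polar sets. -/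
def PC (𝔓 : Set (Measure Ω)) : Set (Measure Ω) :=
  {Q | IsProbabilityMeasure Q ∧ AC 𝔓 Q}

/-- `𝔓`-quasi-sure equality of random variables. -/
def QSEq (𝔓 : Set (Measure Ω)) (f g : Ω → ℝ) : Prop := ∀ P ∈ 𝔓, f =ᵐ[P] g

/-- The `𝔓`-quasi-sure order. -/
def QSLe (𝔓 : Set (Measure Ω)) (f g : Ω → ℝ) : Prop := ∀ P ∈ 𝔓, f ≤ᵐ[P] g

/-- Representatives of elements of `L⁰`: the measurable functions. -/
def L0 (Ω : Type*) [MeasurableSpace Ω] : Set (Ω → ℝ) := {f | Measurable f}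

/-- Representatives of elements of the positive cone `L⁰_{c+}`. -/
def L0pos (𝔓 : Set (Measure Ω)) : Set (Ω → ℝ) :=
  {f | Measurable f ∧ QSLe 𝔓 (fun _ => 0) f}

/-- Representatives of elements of `L^∞_c`. -/
def Linf (𝔓 : Set (Measure Ω)) : Set (Ω → ℝ) :=
  {f | Measurable f ∧ ∃ m : ℝ, 0 < m ∧ QSLe 𝔓 (fun ω => |f ω|) (fun _ => m)}

/-- Representatives of elements of `L^∞_{c+}`. -/
def LinfPos (𝔓 : Set (Measure Ω)) : Set (Ω → ℝ) :=
  {f | f ∈ Linf 𝔓 ∧ QSLe 𝔓 (fun _ => 0) f}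

/-- A set of functions representing a set of equivalence classes in `L⁰_c`:
it consists of measurable functions and is saturated under `𝔓`-q.s. equality. -/
def IsL0Set (𝔓 : Set (Measure Ω)) (𝒞 : Set (Ω → ℝ)) : Prop :=
  𝒞 ⊆ L0 Ω ∧ ∀ f ∈ 𝒞, ∀ g : Ω → ℝ, Measurable g → QSEq 𝔓 f g → g ∈ 𝒞

/-- Function-level version of `j_Q⁻¹ (j_Q 𝒞)` (equivalently, of the subset `j_Q 𝒞` of `L⁰_Q`):
the `Q`-a.s. saturation of `𝒞`. -/
def jSat (Q : Measure Ω) (𝒞 : Set (Ω → ℝ)) : Set (Ω → ℝ) :=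
  {f | Measurable f ∧ ∃ g ∈ 𝒞, f =ᵐ[Q] g}

/-- `𝒬` is a reduction set for `𝒞`. -/
def IsReductionSet (𝔓 𝒬 : Set (Measure Ω)) (𝒞 : Set (Ω → ℝ)) : Prop :=
  𝒬.Nonempty ∧ 𝒬 ⊆ PC 𝔓 ∧ 𝒞 = ⋂ Q ∈ 𝒬, jSat Q 𝒞

/-- `𝒞` is `𝔓`-sensitive. -/
def Sensitive (𝔓 : Set (Measure Ω)) (𝒞 : Set (Ω → ℝ)) : Prop :=
  𝒞 = ⋂ Q ∈ PC 𝔓, jSat Q 𝒞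

/-- `𝒞` is `𝒬`-closed: closed under sequential convergence in `Q`-probability for all `Q ∈ 𝒬`
simultaneously. -/
def QClosedSet (𝒬 : Set (Measure Ω)) (𝒞 : Set (Ω → ℝ)) : Prop :=
  ∀ (X : ℕ → Ω → ℝ) (x : Ω → ℝ), (∀ n, X n ∈ 𝒞) → Measurable x →
    (∀ Q ∈ 𝒬, TendstoInMeasure Q X atTop x) → x ∈ 𝒞

/-- `𝒞` is locally `Q`-closed. -/
def LocallyQClosed (Q : Measure Ω) (𝒞 : Set (Ω → ℝ)) : Prop :=
  ∀ (X : ℕ → Ω → ℝ) (x : Ω → ℝ), (∀ n, X n ∈ 𝒞) → Measurable x →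
    TendstoInMeasure Q X atTop x → ∃ y ∈ 𝒞, x =ᵐ[Q] y

/-- `𝒞` is solid in `L⁰_c` (w.r.t. the quasi-sure order of `𝔓`). -/
def SolidL0 (𝔓 : Set (Measure Ω)) (𝒞 : Set (Ω → ℝ)) : Prop :=
  ∀ f ∈ 𝒞, ∀ g : Ω → ℝ, Measurable g →
    QSLe 𝔓 (fun ω => |g ω|) (fun ω => |f ω|) → g ∈ 𝒞

/-- `𝒞` is solid in `L⁰_{c+}`. -/
def SolidPos (𝔓 : Set (Measure Ω)) (𝒞 : Set (Ω → ℝ)) : Prop :=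
  𝒞 ⊆ L0pos 𝔓 ∧ ∀ f ∈ 𝒞, ∀ g ∈ L0pos 𝔓, QSLe 𝔓 g f → g ∈ 𝒞

/-- `𝒞` is solid (in either of the two senses). -/
def Solid (𝔓 : Set (Measure Ω)) (𝒞 : Set (Ω → ℝ)) : Prop :=
  SolidL0 𝔓 𝒞 ∨ SolidPos 𝔓 𝒞

/-- `f` is the infimum (greatest lower bound) of the family `Y` in the `𝔓`-q.s. order. -/
def IsQSInf (𝔓 : Set (Measure Ω)) {ι : Sort*} (Y : ι → Ω → ℝ) (f : Ω → ℝ) : Prop :=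
  (∀ a, QSLe 𝔓 f (Y a)) ∧
    ∀ g : Ω → ℝ, Measurable g → (∀ a, QSLe 𝔓 g (Y a)) → QSLe 𝔓 g f

/-- `f` is the supremum (least upper bound) of the family `Y` in the `𝔓`-q.s. order. -/
def IsQSSup (𝔓 : Set (Measure Ω)) {ι : Sort*} (Y : ι → Ω → ℝ) (f : Ω → ℝ) : Prop :=
  (∀ a, QSLe 𝔓 (Y a) f) ∧
    ∀ g : Ω → ℝ, Measurable g → (∀ a, QSLe 𝔓 (Y a) g) → QSLe 𝔓 f g

/-- Order convergence of a sequence in `L⁰_c`. -/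
def SeqOrderConv (𝔓 : Set (Measure Ω)) (X : ℕ → Ω → ℝ) (x : Ω → ℝ) : Prop :=
  ∃ Y : ℕ → Ω → ℝ, (∀ n, Measurable (Y n)) ∧
    (∀ m n : ℕ, m ≤ n → QSLe 𝔓 (Y n) (Y m)) ∧
    IsQSInf 𝔓 Y (fun _ => 0) ∧
    ∀ n, QSLe 𝔓 (fun ω => |X n ω - x ω|) (Y n)

/-- `𝒞` is sequentially order closed. -/
def SeqOrderClosed (𝔓 : Set (Measure Ω)) (𝒞 : Set (Ω → ℝ)) : Prop :=
  ∀ (X : ℕ → Ω → ℝ) (x : Ω → ℝ), (∀ n, X n ∈ 𝒞) → Measurable x →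
    SeqOrderConv 𝔓 X x → x ∈ 𝒞

/-- Order convergence of a net in `L⁰_c`. -/
def NetOrderConv (𝔓 : Set (Measure Ω)) {ι : Type*} [Preorder ι]
    (X : ι → Ω → ℝ) (x : Ω → ℝ) : Prop :=
  ∃ Y : ι → Ω → ℝ, (∀ a, Measurable (Y a)) ∧
    (∀ a b : ι, a ≤ b → QSLe 𝔓 (Y b) (Y a)) ∧
    IsQSInf 𝔓 Y (fun _ => 0) ∧
    ∀ a, QSLe 𝔓 (fun ω => |X a ω - x ω|) (Y a)

/-- `𝒞` is order closed (w.r.t. order convergence of nets). -/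
def OrderClosed (𝔓 : Set (Measure Ω)) (𝒞 : Set (Ω → ℝ)) : Prop :=
  ∀ (ι : Type*) [Preorder ι] [IsDirected ι (· ≤ ·)] [Nonempty ι],
    ∀ (X : ι → Ω → ℝ) (x : Ω → ℝ), (∀ a, X a ∈ 𝒞) → Measurable x →
      NetOrderConv 𝔓 X x → x ∈ 𝒞

/-- Order convergence of all (directed) nets is preserved under `j_Q`. -/
def NetOrderConvTransfer (𝔓 : Set (Measure Ω)) (Q : Measure Ω) : Prop :=
  ∀ (ι : Type*) [Preorder ι] [IsDirected ι (· ≤ ·)] [Nonempty ι],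
    ∀ (X : ι → Ω → ℝ) (x : Ω → ℝ), (∀ a, Measurable (X a)) → Measurable x →
      NetOrderConv 𝔓 X x → NetOrderConv {Q} X x

/-- A measure is supported (relative to the `𝔓`-polar sets). -/
def SupportedMeasure (𝔓 : Set (Measure Ω)) (μ : Measure Ω) : Prop :=
  ∃ S : Set Ω, MeasurableSet S ∧ μ Sᶜ = 0 ∧
    ∀ N : Set Ω, MeasurableSet N → μ (N ∩ S) = 0 → ∀ P ∈ 𝔓, P (N ∩ S) = 0

/-- The (possibly infinite) expectation `E_Q[f]` of a (q.s.) non-negative random variable. -/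
noncomputable def EExp (Q : Measure Ω) (f : Ω → ℝ) : ℝ≥0∞ :=
  ∫⁻ ω, ENNReal.ofReal (f ω) ∂Q

/-- The polar `𝒞°_𝒬` of `𝒞` consisting of pairs `(Q, Z)` with `Q ∈ 𝒬` and `Z` in the
set `Zs` of dual test functions (e.g. `L^∞_{c+}` or `L⁰_{c+}`). -/
def polarPairs (𝒬 : Set (Measure Ω)) (Zs 𝒞 : Set (Ω → ℝ)) :
    Set (Measure Ω × (Ω → ℝ)) :=
  {p | p.1 ∈ 𝒬 ∧ p.2 ∈ Zs ∧ ∀ f ∈ 𝒞, EExp p.1 (fun ω => p.2 ω * f ω) ≤ 1}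

/-- The bipolar `𝒞°°_𝒬` of `𝒞`. -/
def bipolarPairs (𝔓 𝒬 : Set (Measure Ω)) (Zs 𝒞 : Set (Ω → ℝ)) : Set (Ω → ℝ) :=
  {f | f ∈ L0pos 𝔓 ∧ ∀ p ∈ polarPairs 𝒬 Zs 𝒞, EExp p.1 (fun ω => p.2 ω * f ω) ≤ 1}

/-- The polar `𝒞^*_𝒬` with a uniform (supremum) constraint. -/
def starPolar (𝔓 𝒬 : Set (Measure Ω)) (𝒞 : Set (Ω → ℝ)) : Set (Ω → ℝ) :=
  {Z | Z ∈ LinfPos 𝔓 ∧ ∀ f ∈ 𝒞, (⨆ Q ∈ 𝒬, EExp Q fun ω => Z ω * f ω) ≤ 1}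

/-- The bipolar `𝒞^{**}_𝒬` with a uniform (supremum) constraint. -/
def starBipolar (𝔓 𝒬 : Set (Measure Ω)) (𝒞 : Set (Ω → ℝ)) : Set (Ω → ℝ) :=
  {f | f ∈ L0pos 𝔓 ∧ ∀ Z ∈ starPolar 𝔓 𝒬 𝒞, (⨆ Q ∈ 𝒬, EExp Q fun ω => Z ω * f ω) ≤ 1}

/-- `ca_c`: finite signed measures vanishing on all `𝔓`-polar sets. -/
def CAc (𝔓 : Set (Measure Ω)) : Set (SignedMeasure Ω) :=
  {ν | ∀ N : Set Ω, MeasurableSet N → (∀ P ∈ 𝔓, P N = 0) → ν.totalVariation N = 0}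

/-- A signed measure is supported if its total variation is. -/
def SupportedSigned (𝔓 : Set (Measure Ω)) (ν : SignedMeasure Ω) : Prop :=
  SupportedMeasure 𝔓 ν.totalVariation

/-- `sca_c`: supported signed measures in `ca_c`. -/
def SCAc (𝔓 : Set (Measure Ω)) : Set (SignedMeasure Ω) :=
  {ν | ν ∈ CAc 𝔓 ∧ SupportedSigned 𝔓 ν}

/-- A signed measure is non-negative. -/
def nonnegSM (ν : SignedMeasure Ω) : Prop := ∀ N : Set Ω, MeasurableSet N → 0 ≤ ν N

/-- The measure associated to a non-negative signed measure (its Jordan positive part). -/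
noncomputable def posMeas (ν : SignedMeasure Ω) : Measure Ω :=
  ν.toJordanDecomposition.posPart

/-- The pairing `∫ f dν` of a function with a signed measure. -/
noncomputable def pairSM (ν : SignedMeasure Ω) (f : Ω → ℝ) : ℝ :=
  ∫ ω, f ω ∂ν.toJordanDecomposition.posPart - ∫ ω, f ω ∂ν.toJordanDecomposition.negPart

/-- The total variation `|ν|` of a signed measure, as a signed measure. -/
noncomputable def tvSigned (ν : SignedMeasure Ω) : SignedMeasure Ω :=
  ν.toJordanDecomposition.posPart.toSignedMeasure +
    ν.toJordanDecomposition.negPart.toSignedMeasure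

/-- `𝔓` is of class (S). -/
def ClassS (𝔓 : Set (Measure Ω)) : Prop :=
  ∃ 𝒬 : Set (Measure Ω), 𝒬 ⊆ PC 𝔓 ∧ (∀ Q ∈ 𝒬, SupportedMeasure 𝔓 Q) ∧
    ∀ N : Set Ω, MeasurableSet N → ((∀ P ∈ 𝔓, P N = 0) ↔ ∀ Q ∈ 𝒬, Q N = 0)

/-- The polar `𝒞°_{ca}` of `𝒞 ⊂ L⁰_{c+}` inside `ca_{c+}` (non-negative members of `ca_c`). -/
def polarCA (𝔓 : Set (Measure Ω)) (𝒞 : Set (Ω → ℝ)) : Set (SignedMeasure Ω) :=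
  {ν | nonnegSM ν ∧ ν ∈ CAc 𝔓 ∧ ∀ f ∈ 𝒞, EExp (posMeas ν) f ≤ 1}

/-- The bipolar `𝒞°°_{ca}`. -/
def bipolarCA (𝔓 : Set (Measure Ω)) (𝒞 : Set (Ω → ℝ)) : Set (Ω → ℝ) :=
  {f | f ∈ L0pos 𝔓 ∧ ∀ ν ∈ polarCA 𝔓 𝒞, EExp (posMeas ν) f ≤ 1}

/-- The polar `𝒞°_{sca}` of `𝒞 ⊂ L⁰_{c+}` inside `sca_{c+}`. -/
def polarSCA (𝔓 : Set (Measure Ω)) (𝒞 : Set (Ω → ℝ)) : Set (SignedMeasure Ω) :=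
  {ν | nonnegSM ν ∧ ν ∈ SCAc 𝔓 ∧ ∀ f ∈ 𝒞, EExp (posMeas ν) f ≤ 1}

/-- The bipolar `𝒞°°_{sca}`. -/
def bipolarSCA (𝔓 : Set (Measure Ω)) (𝒞 : Set (Ω → ℝ)) : Set (Ω → ℝ) :=
  {f | f ∈ L0pos 𝔓 ∧ ∀ ν ∈ polarSCA 𝔓 𝒞, EExp (posMeas ν) f ≤ 1}

/-- The weak topology `σ(M, L^∞_c)` on a set `M` of signed measures. -/
noncomputable def sigmaTop (𝔓 : Set (Measure Ω)) (M : Set (SignedMeasure Ω)) :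
    TopologicalSpace M :=
  TopologicalSpace.induced
    (fun ν : M => fun X : Linf 𝔓 => pairSM ν.1 X.1) inferInstance

/-- The weak topology `σ(𝒳, 𝒴)` on `𝒳 ⊂ L⁰_c` induced by a set `𝒴` of signed measures. -/
noncomputable def sigmaTopDual (𝒳 : Set (Ω → ℝ)) (𝒴 : Set (SignedMeasure Ω)) :
    TopologicalSpace 𝒳 :=
  TopologicalSpace.induced
    (fun f : 𝒳 => fun ν : 𝒴 => pairSM ν.1 f.1) inferInstance

/-- `𝒞` is `𝒬`-stable: it contains every `𝒬`-aggregator of every `𝒬`-coherent family in `𝒞`. -/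
def QStable (𝒬 : Set (Measure Ω)) (𝒞 : Set (Ω → ℝ)) : Prop :=
  ∀ X : Measure Ω → Ω → ℝ, (∀ Q ∈ 𝒬, X Q ∈ 𝒞) →
    ∀ x : Ω → ℝ, Measurable x → (∀ Q ∈ 𝒬, X Q =ᵐ[Q] x) → x ∈ 𝒞


open scoped NNReal

open Topology in
lemma exists_finset_notMem_closure_image {X Y : Type*} (φ : X → Y → ℝ) {C : Set X}
    (hC : IsClosed[TopologicalSpace.induced φ inferInstance] C) {x : X} (hx : x ∉ C) :
    ∃ I : Finset Y, I.restrict (φ x) ∉ closure ((fun g => I.restrict (φ g)) '' C) := by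
  obtain ⟨V, hV, hVC⟩ := isOpen_induced_iff.mp hC.isOpen_compl
  obtain ⟨I, u, hu, hIV⟩ := isOpen_pi_iff.mp hV (φ x) (by rwa [← mem_preimage, hVC])
  refine ⟨I, fun hmem => ?_⟩
  have hW : IsOpen (univ.pi fun i : I => u i) :=
    isOpen_set_pi finite_univ fun i _ => (hu i i.2).1
  have hdisj : Disjoint (univ.pi fun i : I => u i) ((fun g => I.restrict (φ g)) '' C) := by
    refine Set.disjoint_left.mpr ?_
    rintro _ hgu ⟨g, hg, rfl⟩
    have : g ∈ φ ⁻¹' V := hIV fun i hi => hgu ⟨i, hi⟩ (mem_univ _)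
    rw [hVC] at this
    exact this hg
  exact Set.disjoint_left.mp (hdisj.closure_right hW) (fun i _ => (hu i i.2).2) hmem

lemma exists_sum_mul_lt_of_notMem_closure {ι : Type*} [Fintype ι] {K : Set (ι → ℝ)}
    (hK : Convex ℝ K) {x : ι → ℝ} (hx : x ∉ closure K) :
    ∃ (c : ι → ℝ) (u : ℝ), (∀ y ∈ K, ∑ i, c i * y i < u) ∧ u < ∑ i, c i * x i := by
  classical
  obtain ⟨ℓ, u, hlt, hgt⟩ := geometric_hahn_banach_closed_point hK.closure isClosed_closure hx
  have hℓ : ∀ y, ℓ y = ∑ i, ℓ (Pi.single i 1) * y i := fun y => by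
    conv_lhs => rw [← Finset.univ_sum_single y]
    simp only [map_sum]
    refine Finset.sum_congr rfl fun i _ => ?_
    rw [mul_comm, ← smul_eq_mul, ← map_smul, ← Pi.single_smul, smul_eq_mul, mul_one]
  exact ⟨fun i => ℓ (Pi.single i 1), u, fun y hy => hℓ y ▸ hlt y (subset_closure hy), hℓ x ▸ hgt⟩

lemma tvSigned_eq_toSignedMeasure (ν : SignedMeasure Ω) :
    tvSigned ν = ν.totalVariation.toSignedMeasure :=
  (Measure.toSignedMeasure_add _ _).symm

lemma posMeas_toSignedMeasure (μ : Measure Ω) [IsFiniteMeasure μ] :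
    posMeas μ.toSignedMeasure = μ := by
  simpa [posMeas, Measure.jordanDecompositionOfToSignedMeasureSub_posPart] using
    congrArg JordanDecomposition.posPart
      (Measure.toJordanDecomposition_toSignedMeasure_sub (μ := μ) (ν := 0))

lemma nonnegSM_toSignedMeasure (μ : Measure Ω) [IsFiniteMeasure μ] :
    nonnegSM μ.toSignedMeasure := fun N hN => by
  rw [Measure.toSignedMeasure_apply_measurable hN]
  exact measureReal_nonneg

lemma AC.smul {𝔓 : Set (Measure Ω)} {μ : Measure Ω} (hμ : AC 𝔓 μ) {R : Type*}
    [SMulZeroClass R ℝ≥0∞] [IsScalarTower R ℝ≥0∞ ℝ≥0∞] (c : R) :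
    AC 𝔓 (c • μ) := fun N hN hpolar => by
  rw [Measure.smul_apply, hμ N hN hpolar, smul_zero]

lemma AC.finsetSum {𝔓 : Set (Measure Ω)} {ι : Type*} (s : Finset ι) {μ : ι → Measure Ω}
    (hμ : ∀ i ∈ s, AC 𝔓 (μ i)) : AC 𝔓 (∑ i ∈ s, μ i) := fun N hN hpolar => by
  rw [Measure.coe_finsetSum, Finset.sum_apply]
  exact Finset.sum_eq_zero fun i hi => hμ i hi N hN hpolar

lemma Measure.toSignedMeasure_finsetSum {ι : Type*} (s : Finset ι) (μ : ι → Measure Ω)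
    [∀ i, IsFiniteMeasure (μ i)] :
    (∑ i ∈ s, μ i).toSignedMeasure = ∑ i ∈ s, (μ i).toSignedMeasure := by
  classical
  induction s using Finset.induction_on with
  | empty => simp
  | insert i s hi ih => simp only [Finset.sum_insert hi, Measure.toSignedMeasure_add, ih]

def PCInter (𝔓 : Set (Measure Ω)) (𝒴 : Set (SignedMeasure Ω)) : Set (Measure Ω) :=
  {Q | Q ∈ PC 𝔓 ∧ ∃ ν ∈ 𝒴, nonnegSM ν ∧ Q = posMeas ν}

lemma normalize_mem_PCInter {𝔓 : Set (Measure Ω)} (𝒴 : Submodule ℝ (SignedMeasure Ω))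
    (μ : Measure Ω) [IsFiniteMeasure μ] [NeZero μ] (hμ : AC 𝔓 μ)
    (hμ𝒴 : μ.toSignedMeasure ∈ 𝒴) : (μ univ)⁻¹ • μ ∈ PCInter 𝔓 𝒴 := by
  have hpos : (μ univ).toNNReal ≠ 0 := (ENNReal.toNNReal_pos (NeZero.ne _) (measure_ne_top _ _)).ne'
  have hsmul : (μ univ)⁻¹ • μ = (μ univ).toNNReal⁻¹ • μ := by
    rw [ENNReal.smul_def, ENNReal.coe_inv hpos, ENNReal.coe_toNNReal (measure_ne_top _ _)]
  refine ⟨⟨inferInstance, hμ.smul _⟩, _, ?_, nonnegSM_toSignedMeasure _,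
    (posMeas_toSignedMeasure _).symm⟩
  rw [Measure.toSignedMeasure_congr hsmul, Measure.toSignedMeasure_smul]
  exact Submodule.smul_of_tower_mem _ _ hμ𝒴

lemma pairSM_congr_ae (ν : SignedMeasure Ω) {f g : Ω → ℝ} (h : f =ᵐ[ν.totalVariation] g) :
    pairSM ν f = pairSM ν g := by
  rw [SignedMeasure.totalVariation, EventuallyEq, ae_add_measure_iff] at h
  rw [pairSM, pairSM, integral_congr_ae h.1, integral_congr_ae h.2]

lemma pairSM_smul_add_smul (ν : SignedMeasure Ω) {x y : Ω → ℝ} (a b : ℝ)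
    (hx : Integrable x ν.totalVariation) (hy : Integrable y ν.totalVariation) :
    pairSM ν (a • x + b • y) = a * pairSM ν x + b * pairSM ν y := by
  rw [SignedMeasure.totalVariation, integrable_add_measure] at hx hy
  have hlin : ∀ μ : Measure Ω, Integrable x μ → Integrable y μ →
      ∫ ω, (a • x + b • y) ω ∂μ = a * ∫ ω, x ω ∂μ + b * ∫ ω, y ω ∂μ := fun μ hxμ hyμ => by
    simp only [Pi.add_apply, Pi.smul_apply, smul_eq_mul]
    rw [integral_add (hxμ.const_mul a) (hyμ.const_mul b), integral_const_mul, integral_const_mul]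
  rw [pairSM, pairSM, pairSM, hlin _ hx.1 hy.1, hlin _ hx.2 hy.2]
  ring

lemma convex_image_pairSM {ι : Type*} (ν : ι → SignedMeasure Ω) {𝒞 : Set (Ω → ℝ)}
    (h𝒞 : Convex ℝ 𝒞) (hint : ∀ f ∈ 𝒞, ∀ i, Integrable f (ν i).totalVariation) :
    Convex ℝ ((fun g i => pairSM (ν i) g) '' 𝒞) := by
  rintro _ ⟨x, hx, rfl⟩ _ ⟨y, hy, rfl⟩ a b ha hb hab
  refine ⟨a • x + b • y, h𝒞 hx hy ha hb hab, funext fun i => ?_⟩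
  exact pairSM_smul_add_smul _ a b (hint x hx i) (hint y hy i)

lemma sum_mul_pairSM_congr_ae {ι : Type*} [Fintype ι] (ν : ι → SignedMeasure Ω) (c : ι → ℝ)
    {f g : Ω → ℝ} (h : f =ᵐ[∑ i, ‖c i‖₊ • (ν i).totalVariation] g) :
    ∑ i, c i * pairSM (ν i) f = ∑ i, c i * pairSM (ν i) g := by
  refine Finset.sum_congr rfl fun i hi => ?_
  rcases eq_or_ne (c i) 0 with hc | hc
  · rw [hc, zero_mul, zero_mul]
  have hle : ‖c i‖₊ • (ν i).totalVariation ≤ ∑ j, ‖c j‖₊ • (ν j).totalVariation :=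
    Finset.single_le_sum (f := fun j => ‖c j‖₊ • (ν j).totalVariation)
      (fun _ _ => Measure.zero_le _) hi
  have hfg := h.filter_mono (ae_mono hle)
  rw [pairSM_congr_ae _ ((Measure.ae_smul_measure_iff (nnnorm_ne_zero_iff.mpr hc)).mp hfg)]

lemma exists_mem_ae_eq_of_mem_iInter_jSat {𝔓 : Set (Measure Ω)}
    (𝒴 : Submodule ℝ (SignedMeasure Ω)) (h𝒴ca : ∀ ν ∈ 𝒴, ν ∈ CAc 𝔓)
    (h𝒴tv : ∀ ν ∈ 𝒴, tvSigned ν ∈ 𝒴) {𝒞 : Set (Ω → ℝ)} (h𝒞 : 𝒞.Nonempty) {f : Ω → ℝ}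
    (hf : f ∈ ⋂ Q ∈ PCInter 𝔓 𝒴, jSat Q 𝒞) {ι : Type*} [Fintype ι]
    (ν : ι → SignedMeasure Ω) (hν : ∀ i, ν i ∈ 𝒴) (w : ι → ℝ≥0) :
    ∃ g ∈ 𝒞, f =ᵐ[∑ i, w i • (ν i).totalVariation] g := by
  set μ := ∑ i, w i • (ν i).totalVariation
  rcases eq_zero_or_neZero μ with hμ | hμ
  · obtain ⟨g, hg⟩ := h𝒞
    exact ⟨g, hg, by rw [hμ, EventuallyEq, ae_zero]; exact Filter.eventually_bot⟩
  have hμAC : AC 𝔓 μ := AC.finsetSum _ fun i _ => AC.smul (h𝒴ca _ (hν i)) _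
  have hμ𝒴 : μ.toSignedMeasure ∈ 𝒴 := by
    rw [Measure.toSignedMeasure_finsetSum]
    refine Submodule.sum_mem _ fun i _ => ?_
    rw [Measure.toSignedMeasure_smul, ← tvSigned_eq_toSignedMeasure]
    exact Submodule.smul_of_tower_mem _ _ (h𝒴tv _ (hν i))
  obtain ⟨-, g, hg, hfg⟩ := mem_iInter₂.mp hf _ (normalize_mem_PCInter 𝒴 μ hμAC hμ𝒴)
  have hinv : (μ univ)⁻¹ ≠ 0 := ENNReal.inv_ne_zero.mpr (measure_ne_top _ _)
  exact ⟨g, hg, (Measure.ae_ennreal_smul_measure_iff hinv).mp hfg⟩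

theorem stmt14_general {Ω : Type*} [MeasurableSpace Ω]
    (𝔓 : Set (Measure Ω))
    (𝒳 : Set (Ω → ℝ)) (h𝒳L0 : IsL0Set 𝔓 𝒳)
    (𝒴 : Set (SignedMeasure Ω))
    (h𝒴zero : (0 : SignedMeasure Ω) ∈ 𝒴)
    (h𝒴add : ∀ μ ∈ 𝒴, ∀ ν ∈ 𝒴, μ + ν ∈ 𝒴)
    (h𝒴smul : ∀ a : ℝ, ∀ μ ∈ 𝒴, a • μ ∈ 𝒴)
    (h𝒴ca : ∀ ν ∈ 𝒴, ν ∈ CAc 𝔓)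
    (h𝒴tv : ∀ ν ∈ 𝒴, tvSigned ν ∈ 𝒴)
    -- dual pair: integrability and separation of points on both sides
    (hint : ∀ f ∈ 𝒳, ∀ ν ∈ 𝒴, Integrable f ν.totalVariation)
    (𝒞 : Set (Ω → ℝ)) (h𝒞ne : 𝒞.Nonempty) (h𝒞𝒳 : 𝒞 ⊆ 𝒳)
    (h𝒞conv : Convex ℝ 𝒞)
    (h𝒞closed : @IsClosed _ (sigmaTopDual 𝒳 𝒴) {f : 𝒳 | (f : Ω → ℝ) ∈ 𝒞}) :
    ∃ 𝒬 : Set (Measure Ω),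
      (∀ Q ∈ 𝒬, Q ∈ PC 𝔓 ∧ ∃ ν ∈ 𝒴, nonnegSM ν ∧ Q = posMeas ν) ∧
      𝒞 = (⋂ Q ∈ 𝒬, jSat Q 𝒞) ∩ 𝒳 := by
  let 𝒴ₘ : Submodule ℝ (SignedMeasure Ω) :=
    { carrier := 𝒴, add_mem' := fun ha hb => h𝒴add _ ha _ hb, zero_mem' := h𝒴zero,
      smul_mem' := h𝒴smul }
  refine ⟨PCInter 𝔓 𝒴, fun Q hQ => hQ, subset_antisymm (fun f hf => ⟨mem_iInter₂.mpr
    fun Q _ => ⟨h𝒳L0.1 (h𝒞𝒳 hf), f, hf, .rfl⟩, h𝒞𝒳 hf⟩) ?_⟩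
  rintro f ⟨hfQ, hf𝒳⟩
  by_contra hf𝒞
  obtain ⟨I, hI⟩ := exists_finset_notMem_closure_image
    (fun g : 𝒳 => fun ν : 𝒴 => pairSM ν.1 g.1) h𝒞closed (x := ⟨f, hf𝒳⟩) hf𝒞
  set T : (Ω → ℝ) → I → ℝ := fun g i => pairSM i.1.1 g
  change T f ∉ closure ((T ∘ Subtype.val) '' (Subtype.val ⁻¹' 𝒞 : Set 𝒳)) at hI
  rw [image_comp, Subtype.image_preimage_coe, inter_eq_right.mpr h𝒞𝒳] at hI
  obtain ⟨c, u, hlt, hgt⟩ := exists_sum_mul_lt_of_notMem_closure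
    (convex_image_pairSM (fun i : I => i.1.1) h𝒞conv fun g hg i => hint g (h𝒞𝒳 hg) _ i.1.2) hI
  obtain ⟨g, hg, hfg⟩ := exists_mem_ae_eq_of_mem_iInter_jSat 𝒴ₘ h𝒴ca h𝒴tv h𝒞ne hfQ
    (fun i : I => i.1.1) (fun i => i.1.2) (fun i => ‖c i‖₊)
  exact (hlt _ ⟨g, hg, rfl⟩).not_gt (sum_mul_pairSM_congr_ae _ c hfg ▸ hgt)

/-- A convex `σ(𝒳,𝒴)`-closed set is `𝒫`-sensitive in `𝒳` for some
reduction set `𝒬 ⊂ 𝔓_c(Ω) ∩ 𝒴`. -/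
theorem stmt14 {Ω : Type*} [MeasurableSpace Ω]
    (𝔓 : Set (Measure Ω)) (h𝔓ne : 𝔓.Nonempty)
    (h𝔓prob : ∀ P ∈ 𝔓, IsProbabilityMeasure P)
    (𝒳 : Set (Ω → ℝ)) (h𝒳L0 : IsL0Set 𝔓 𝒳)
    (h𝒳zero : (0 : Ω → ℝ) ∈ 𝒳)
    (h𝒳add : ∀ f ∈ 𝒳, ∀ g ∈ 𝒳, f + g ∈ 𝒳)
    (h𝒳smul : ∀ a : ℝ, ∀ f ∈ 𝒳, a • f ∈ 𝒳)
    (𝒴 : Set (SignedMeasure Ω))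
    (h𝒴zero : (0 : SignedMeasure Ω) ∈ 𝒴)
    (h𝒴add : ∀ μ ∈ 𝒴, ∀ ν ∈ 𝒴, μ + ν ∈ 𝒴)
    (h𝒴smul : ∀ a : ℝ, ∀ μ ∈ 𝒴, a • μ ∈ 𝒴)
    (h𝒴ca : ∀ ν ∈ 𝒴, ν ∈ CAc 𝔓)
    (h𝒴tv : ∀ ν ∈ 𝒴, tvSigned ν ∈ 𝒴)
    -- dual pair: integrability and separation of points on both sides
    (hint : ∀ f ∈ 𝒳, ∀ ν ∈ 𝒴, Integrable f ν.totalVariation)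
    (hsep𝒳 : ∀ f ∈ 𝒳, ∀ g ∈ 𝒳, ¬ QSEq 𝔓 f g → ∃ ν ∈ 𝒴, pairSM ν f ≠ pairSM ν g)
    (hsep𝒴 : ∀ μ ∈ 𝒴, ∀ ν ∈ 𝒴, μ ≠ ν → ∃ f ∈ 𝒳, pairSM μ f ≠ pairSM ν f)
    (𝒞 : Set (Ω → ℝ)) (h𝒞ne : 𝒞.Nonempty) (h𝒞𝒳 : 𝒞 ⊆ 𝒳)
    (h𝒞L0 : IsL0Set 𝔓 𝒞) (h𝒞conv : Convex ℝ 𝒞)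
    (h𝒞closed : @IsClosed _ (sigmaTopDual 𝒳 𝒴) {f : 𝒳 | (f : Ω → ℝ) ∈ 𝒞}) :
    ∃ 𝒬 : Set (Measure Ω),
      (∀ Q ∈ 𝒬, Q ∈ PC 𝔓 ∧ ∃ ν ∈ 𝒴, nonnegSM ν ∧ Q = posMeas ν) ∧
      𝒞 = (⋂ Q ∈ 𝒬, jSat Q 𝒞) ∩ 𝒳 :=
  stmt14_general 𝔓 𝒳 h𝒳L0 𝒴 h𝒴zero h𝒴add h𝒴smul h𝒴ca h𝒴tv hint 𝒞 h𝒞ne h𝒞𝒳 h𝒞conv h𝒞closed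
end Robust
end

section
/- Let 𝒞 ⊂ L⁰_{c+} be non-empty and let 𝒬 ⊂ 𝔓_c(Ω) be non-empty with 𝒬 ⊂ sca_c and pairwise disjoint supports (for Q ≠ Q′ in 𝒬, S(Q) ∩ S(Q′) is 𝒫-polar). Then 𝒞°°_𝒬 = 𝒞**_𝒬, where 𝒞*_𝒬 := {Z ∈ L^∞_{c+} : sup_{Q∈𝒬} E_Q[ZX] ≤ 1 for all X ∈ 𝒞} and 𝒞**_𝒬 := {X ∈ L⁰_{c+} : sup_{Q∈𝒬} E_Q[ZX] ≤ 1 for all Z ∈ 𝒞*_𝒬}. -/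
open MeasureTheory Filter Set
open scoped ENNReal

namespace Robust

variable {Ω : Type*} [MeasurableSpace Ω]

/-
Pairing a polar pair `(Q, Z)` with the support of `Q` localises it: `Z' := 1_{S(Q)} Z` is still
in `L^∞_{c+}`, agrees with `Z` `Q`-a.s., and is `Q'`-a.s. zero for every other `Q' ∈ 𝒬` because
`S(Q)` is `Q'`-null. Hence `sup_{Q' ∈ 𝒬} E_{Q'}[Z' X] = E_Q[Z X]`, so `Z' ∈ 𝒞*_𝒬`, and testing
`X ∈ 𝒞**_𝒬` against `Z'` gives `E_Q[Z X] ≤ 1`. The reverse inclusion holds for any `𝒬`.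
-/

theorem bipolarPairs_subset_starBipolar (𝔓 𝒬 : Set (Measure Ω)) (𝒞 : Set (Ω → ℝ)) :
    bipolarPairs 𝔓 𝒬 (LinfPos 𝔓) 𝒞 ⊆ starBipolar 𝔓 𝒬 𝒞 := by
  rintro f ⟨hf, hpolar⟩
  refine ⟨hf, fun Z hZ => iSup₂_le fun Q hQ => hpolar (Q, Z) ⟨hQ, hZ.1, fun g hg => ?_⟩⟩
  exact (le_iSup₂ (f := fun Q _ => EExp Q fun ω => Z ω * g ω) Q hQ).trans (hZ.2 g hg)

theorem indicator_mem_LinfPos {𝔓 : Set (Measure Ω)} {Z : Ω → ℝ} {s : Set Ω}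
    (hZ : Z ∈ LinfPos 𝔓) (hs : MeasurableSet s) : s.indicator Z ∈ LinfPos 𝔓 := by
  obtain ⟨⟨hZm, m, hm, hbound⟩, hnonneg⟩ := hZ
  refine ⟨⟨hZm.indicator hs, m, hm, fun P hP => ?_⟩, fun P hP => ?_⟩
  · filter_upwards [hbound P hP] with ω hω
    by_cases h : ω ∈ s
    · simpa [indicator_of_mem h] using hω
    · simpa [indicator_of_notMem h] using hm.le
  · filter_upwards [hnonneg P hP] with ω hω
    by_cases h : ω ∈ s
    · simpa [indicator_of_mem h] using hω
    · simp [indicator_of_notMem h]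

theorem EExp_indicator_mul_of_measure_compl_eq_zero {Q : Measure Ω} {s : Set Ω}
    (hs : Q sᶜ = 0) (Z g : Ω → ℝ) :
    EExp Q (fun ω => s.indicator Z ω * g ω) = EExp Q (fun ω => Z ω * g ω) := by
  refine lintegral_congr_ae ?_
  filter_upwards [mem_ae_iff.2 hs] with ω hω
  rw [indicator_of_mem hω]

theorem EExp_indicator_mul_of_measure_eq_zero {Q : Measure Ω} {s : Set Ω}
    (hs : Q s = 0) (Z g : Ω → ℝ) :
    EExp Q (fun ω => s.indicator Z ω * g ω) = 0 := by
  refine lintegral_eq_zero_of_ae_eq_zero ?_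
  filter_upwards [compl_mem_ae_iff.2 hs] with ω hω
  simp [indicator_of_notMem hω]

theorem measure_eq_zero_of_polar_inter {𝔓 : Set (Measure Ω)} {Q : Measure Ω} {s t : Set Ω}
    (hQ : AC 𝔓 Q) (hs : MeasurableSet s) (ht : MeasurableSet t) (htc : Q tᶜ = 0)
    (hpolar : ∀ P ∈ 𝔓, P (s ∩ t) = 0) : Q s = 0 := by
  rw [← measure_inter_conull htc]
  exact hQ _ (hs.inter ht) hpolar

theorem indicator_mem_starPolar {𝔓 𝒬 : Set (Measure Ω)} {𝒞 : Set (Ω → ℝ)} {Q : Measure Ω}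
    {Z : Ω → ℝ} {s : Set Ω} (hQZ : (Q, Z) ∈ polarPairs 𝒬 (LinfPos 𝔓) 𝒞)
    (hs : MeasurableSet s) (hsc : Q sᶜ = 0) (hnull : ∀ Q' ∈ 𝒬, Q' ≠ Q → Q' s = 0) :
    s.indicator Z ∈ starPolar 𝔓 𝒬 𝒞 := by
  obtain ⟨-, hZ, hZpolar⟩ := hQZ
  refine ⟨indicator_mem_LinfPos hZ hs, fun g hg => iSup₂_le fun Q' hQ' => ?_⟩
  rcases eq_or_ne Q' Q with rfl | hne
  · rw [EExp_indicator_mul_of_measure_compl_eq_zero hsc]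
    exact hZpolar g hg
  · rw [EExp_indicator_mul_of_measure_eq_zero (hnull Q' hQ' hne)]
    exact zero_le_one

theorem stmt17_general {Ω : Type*} [MeasurableSpace Ω]
    (𝔓 : Set (Measure Ω))
    (𝒞 : Set (Ω → ℝ))
    (𝒬 : Set (Measure Ω)) (h𝒬 : 𝒬 ⊆ PC 𝔓)
    (S : Measure Ω → Set Ω)
    (hS : ∀ Q ∈ 𝒬, MeasurableSet (S Q) ∧ Q (S Q)ᶜ = 0 ∧
        ∀ N : Set Ω, MeasurableSet N → Q (N ∩ S Q) = 0 → ∀ P ∈ 𝔓, P (N ∩ S Q) = 0)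
    (hdisj : ∀ Q ∈ 𝒬, ∀ Q' ∈ 𝒬, Q ≠ Q' → ∀ P ∈ 𝔓, P (S Q ∩ S Q') = 0) :
    bipolarPairs 𝔓 𝒬 (LinfPos 𝔓) 𝒞 = starBipolar 𝔓 𝒬 𝒞 := by
  refine (bipolarPairs_subset_starBipolar 𝔓 𝒬 𝒞).antisymm ?_
  rintro f ⟨hf, hstar⟩
  refine ⟨hf, fun ⟨Q, Z⟩ hQZ => ?_⟩
  have hQ : Q ∈ 𝒬 := hQZ.1
  obtain ⟨hSQ, hSQc, -⟩ := hS Q hQ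
  have hnull : ∀ Q' ∈ 𝒬, Q' ≠ Q → Q' (S Q) = 0 := fun Q' hQ' hne =>
    measure_eq_zero_of_polar_inter (h𝒬 hQ').2 hSQ (hS Q' hQ').1 (hS Q' hQ').2.1
      (hdisj Q hQ Q' hQ' hne.symm)
  calc EExp Q (fun ω => Z ω * f ω)
      = EExp Q (fun ω => (S Q).indicator Z ω * f ω) :=
        (EExp_indicator_mul_of_measure_compl_eq_zero hSQc Z f).symm
    _ ≤ ⨆ Q' ∈ 𝒬, EExp Q' (fun ω => (S Q).indicator Z ω * f ω) :=
        le_iSup₂ (f := fun Q' _ => EExp Q' fun ω => (S Q).indicator Z ω * f ω) Q hQ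
    _ ≤ 1 := hstar _ (indicator_mem_starPolar hQZ hSQ hSQc hnull)

/-- For a supported reduction family with pairwise disjoint supports, the
bipolar coincides with the bipolar for the uniform (supremum) polar. -/
theorem stmt17 {Ω : Type*} [MeasurableSpace Ω]
    (𝔓 : Set (Measure Ω)) (h𝔓ne : 𝔓.Nonempty)
    (h𝔓prob : ∀ P ∈ 𝔓, IsProbabilityMeasure P)
    (𝒞 : Set (Ω → ℝ)) (h𝒞L0 : IsL0Set 𝔓 𝒞) (h𝒞pos : 𝒞 ⊆ L0pos 𝔓) (h𝒞ne : 𝒞.Nonempty)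
    (𝒬 : Set (Measure Ω)) (h𝒬ne : 𝒬.Nonempty) (h𝒬 : 𝒬 ⊆ PC 𝔓)
    (S : Measure Ω → Set Ω)
    (hS : ∀ Q ∈ 𝒬, MeasurableSet (S Q) ∧ Q (S Q)ᶜ = 0 ∧
        ∀ N : Set Ω, MeasurableSet N → Q (N ∩ S Q) = 0 → ∀ P ∈ 𝔓, P (N ∩ S Q) = 0)
    (hdisj : ∀ Q ∈ 𝒬, ∀ Q' ∈ 𝒬, Q ≠ Q' → ∀ P ∈ 𝔓, P (S Q ∩ S Q') = 0) :
    bipolarPairs 𝔓 𝒬 (LinfPos 𝔓) 𝒞 = starBipolar 𝔓 𝒬 𝒞 :=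
  stmt17_general 𝔓 𝒞 𝒬 h𝒬 S hS hdisj
end Robust
end

section
/- Let 𝒞 ⊂ L⁰_{c+} and 𝒬 ⊂ 𝔓_c(Ω) be non-empty. Define 𝒞◇_𝒬 := {(Q,Z) ∈ 𝒬 × L⁰_{c+} : E_Q[ZX] ≤ 1 for all X ∈ 𝒞} and 𝒞◇◇_𝒬 := {X ∈ L⁰_{c+} : E_Q[ZX] ≤ 1 for all (Q,Z) ∈ 𝒞◇_𝒬}. Then 𝒞◇◇_𝒬 = 𝒞°°_𝒬, where 𝒞°°_𝒬 is the bipolar taken with dual elements (Q,Z) ∈ 𝒬 × L^∞_{c+}. -/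
open MeasureTheory Filter Set
open scoped ENNReal

namespace Robust

variable {Ω : Type*} [MeasurableSpace Ω]

/-! Every `Z ∈ L⁰_{c+}` is, `Q`-a.s., the increasing limit of its truncations
`Z⁺ ∧ n ∈ L^∞_{c+}`. Since `0 ≤ a ≤ b` gives `(a x)⁺ ≤ (b x)⁺` whatever the sign of `x`, truncating
keeps `(Q, Z)` in the polar, and monotone convergence carries the bipolar inequality from the
truncations to `Z`. -/

lemma ofReal_mul_le_ofReal_mul {a b : ℝ} (ha : 0 ≤ a) (hab : a ≤ b) (x : ℝ) :
    ENNReal.ofReal (a * x) ≤ ENNReal.ofReal (b * x) := by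
  rcases le_or_gt 0 x with hx | hx
  · exact ENNReal.ofReal_le_ofReal (mul_le_mul_of_nonneg_right hab hx)
  · rw [ENNReal.ofReal_of_nonpos (mul_nonpos_of_nonneg_of_nonpos ha hx.le)]
    exact bot_le

lemma AC.ae_nonneg {𝔓 : Set (Measure Ω)} {Q : Measure Ω} (hQ : AC 𝔓 Q) {g : Ω → ℝ}
    (hg : g ∈ L0pos 𝔓) : 0 ≤ᵐ[Q] g :=
  hQ _ (measurableSet_le measurable_const hg.1).compl fun P hP => hg.2 P hP

lemma LinfPos_subset_L0pos (𝔓 : Set (Measure Ω)) : LinfPos 𝔓 ⊆ L0pos 𝔓 :=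
  fun _ hZ => ⟨hZ.1.1, hZ.2⟩

lemma bipolarPairs_anti (𝔓 𝒬 : Set (Measure Ω)) {Zs Zs' : Set (Ω → ℝ)} (h : Zs ⊆ Zs')
    (𝒞 : Set (Ω → ℝ)) : bipolarPairs 𝔓 𝒬 Zs' 𝒞 ⊆ bipolarPairs 𝔓 𝒬 Zs 𝒞 :=
  fun _ ⟨hX, hpolar⟩ => ⟨hX, fun p hp => hpolar p ⟨hp.1, h hp.2.1, hp.2.2⟩⟩

def posTrunc (n : ℕ) (z : ℝ) : ℝ := min (max z 0) n

lemma posTrunc_nonneg (n : ℕ) (z : ℝ) : 0 ≤ posTrunc n z :=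
  le_min (le_max_right _ _) n.cast_nonneg

lemma posTrunc_le {z : ℝ} (hz : 0 ≤ z) (n : ℕ) : posTrunc n z ≤ z :=
  (min_le_left _ _).trans (max_le le_rfl hz)

lemma posTrunc_le_max (n : ℕ) (z : ℝ) : posTrunc n z ≤ max z 0 :=
  min_le_left _ _

lemma monotone_posTrunc (z : ℝ) : Monotone fun n => posTrunc n z :=
  fun _ _ hmn => min_le_min le_rfl (Nat.cast_le.2 hmn)

lemma iSup_ofReal_posTrunc_mul (z x : ℝ) :
    ⨆ n, ENNReal.ofReal (posTrunc n z * x) = ENNReal.ofReal (max z 0 * x) := by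
  refine le_antisymm (iSup_le fun n => ofReal_mul_le_ofReal_mul (posTrunc_nonneg n z)
    (posTrunc_le_max n z) x) (le_iSup_of_le ⌈max z 0⌉₊ ?_)
  rw [posTrunc, min_eq_left (Nat.le_ceil _)]

lemma measurable_posTrunc (n : ℕ) : Measurable (posTrunc n) :=
  (measurable_id.max measurable_const).min measurable_const

lemma posTrunc_mem_LinfPos (𝔓 : Set (Measure Ω)) {Z : Ω → ℝ} (hZ : Measurable Z) (n : ℕ) :
    (fun ω => posTrunc n (Z ω)) ∈ LinfPos 𝔓 := by
  refine ⟨⟨(measurable_posTrunc n).comp hZ, n + 1, by positivity,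
    fun P _ => .of_forall fun ω => ?_⟩, fun P _ => .of_forall fun ω => posTrunc_nonneg n (Z ω)⟩
  change |posTrunc n (Z ω)| ≤ n + 1
  rw [abs_of_nonneg (posTrunc_nonneg n (Z ω))]
  exact (min_le_right _ _).trans (by simp)

lemma EExp_posTrunc_mul_le {Q : Measure Ω} {Z : Ω → ℝ} (hZ : 0 ≤ᵐ[Q] Z) (n : ℕ)
    (f : Ω → ℝ) :
    EExp Q (fun ω => posTrunc n (Z ω) * f ω) ≤ EExp Q (fun ω => Z ω * f ω) :=
  lintegral_mono_ae <| hZ.mono fun ω hω =>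
    ofReal_mul_le_ofReal_mul (posTrunc_nonneg n (Z ω)) (posTrunc_le hω n) (f ω)

lemma EExp_mul_eq_iSup_posTrunc {Q : Measure Ω} {Z X : Ω → ℝ} (hZ : Measurable Z)
    (hZ_nonneg : 0 ≤ᵐ[Q] Z) (hX : Measurable X) :
    EExp Q (fun ω => Z ω * X ω) = ⨆ n, EExp Q (fun ω => posTrunc n (Z ω) * X ω) := by
  have hmeas (n : ℕ) : Measurable fun ω => ENNReal.ofReal (posTrunc n (Z ω) * X ω) :=
    (((measurable_posTrunc n).comp hZ).mul hX).ennreal_ofReal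
  have hmono : Monotone fun n ω => ENNReal.ofReal (posTrunc n (Z ω) * X ω) :=
    fun _ _ hmn ω => ofReal_mul_le_ofReal_mul (posTrunc_nonneg _ (Z ω))
      (monotone_posTrunc (Z ω) hmn) (X ω)
  simp only [EExp]
  rw [← lintegral_iSup hmeas hmono]
  refine lintegral_congr_ae (hZ_nonneg.mono fun ω (hω : 0 ≤ Z ω) => ?_)
  dsimp only
  rw [iSup_ofReal_posTrunc_mul, max_eq_left hω]

lemma posTrunc_mem_polarPairs {𝔓 𝒬 : Set (Measure Ω)} (h𝒬 : 𝒬 ⊆ PC 𝔓) {𝒞 : Set (Ω → ℝ)}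
    {Q : Measure Ω} {Z : Ω → ℝ} (hQZ : (Q, Z) ∈ polarPairs 𝒬 (L0pos 𝔓) 𝒞) (n : ℕ) :
    (Q, fun ω => posTrunc n (Z ω)) ∈ polarPairs 𝒬 (LinfPos 𝔓) 𝒞 :=
  ⟨hQZ.1, posTrunc_mem_LinfPos 𝔓 hQZ.2.1.1 n, fun f hf =>
    (EExp_posTrunc_mul_le ((h𝒬 hQZ.1).2.ae_nonneg hQZ.2.1) n f).trans (hQZ.2.2 f hf)⟩

theorem stmt18_general {Ω : Type*} [MeasurableSpace Ω]
    (𝔓 : Set (Measure Ω))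
    (𝒞 : Set (Ω → ℝ))
    (𝒬 : Set (Measure Ω)) (h𝒬 : 𝒬 ⊆ PC 𝔓) :
    bipolarPairs 𝔓 𝒬 (L0pos 𝔓) 𝒞 = bipolarPairs 𝔓 𝒬 (LinfPos 𝔓) 𝒞 := by
  refine (bipolarPairs_anti 𝔓 𝒬 (LinfPos_subset_L0pos 𝔓) 𝒞).antisymm ?_
  rintro X ⟨hX, hbounded⟩
  refine ⟨hX, fun ⟨Q, Z⟩ hQZ => ?_⟩
  have hZ_nonneg : 0 ≤ᵐ[Q] Z := (h𝒬 hQZ.1).2.ae_nonneg hQZ.2.1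
  rw [EExp_mul_eq_iSup_posTrunc hQZ.2.1.1 hZ_nonneg hX.1]
  exact iSup_le fun n => hbounded _ (posTrunc_mem_polarPairs h𝒬 hQZ n)

/-- The bipolar with unbounded dual test functions `(Q, Z) ∈ 𝒬 × L⁰_{c+}`
coincides with the bipolar with bounded ones `(Q, Z) ∈ 𝒬 × L^∞_{c+}`. -/
theorem stmt18 {Ω : Type*} [MeasurableSpace Ω]
    (𝔓 : Set (Measure Ω)) (h𝔓ne : 𝔓.Nonempty)
    (h𝔓prob : ∀ P ∈ 𝔓, IsProbabilityMeasure P)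
    (𝒞 : Set (Ω → ℝ)) (h𝒞L0 : IsL0Set 𝔓 𝒞) (h𝒞pos : 𝒞 ⊆ L0pos 𝔓) (h𝒞ne : 𝒞.Nonempty)
    (𝒬 : Set (Measure Ω)) (h𝒬ne : 𝒬.Nonempty) (h𝒬 : 𝒬 ⊆ PC 𝔓) :
    bipolarPairs 𝔓 𝒬 (L0pos 𝔓) 𝒞 = bipolarPairs 𝔓 𝒬 (LinfPos 𝔓) 𝒞 :=
  stmt18_general 𝔓 𝒞 𝒬 h𝒬
end Robust
end
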